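/- arXiv:1402.4839 — 5 statements merged into one kernel-verified Lean document; each statement's English description precedes it below -/
import Mathlib

section
/- For generalized numbers x = [x_ε], y = [y_ε] ∈ ℝ̃, the element x ∧ y := [min(x_ε, y_ε)] is well defined (independent of representatives) and is the infimum of x and y with respect to the order: x ∧ y ≤ x, x ∧ y ≤ y, and any z ∈ ℝ̃ with z ≤ x and z ≤ y satisfies z ≤ x ∧ y. -/
open Set

/-- Moderate real nets. -/
def RModerate (x : ℝ → ℝ) : Prop :=
  ∃ N : ℕ, ∃ C > (0:ℝ), ∃ ε₀ ∈ Ioc (0:ℝ) 1, ∀ ε ∈ Ioc (0:ℝ) ε₀, |x ε| ≤ C * ε ^ (-(N:ℤ))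

/-- Negligible real nets. -/
def RNegligible (x : ℝ → ℝ) : Prop :=
  ∀ m : ℕ, ∃ C > (0:ℝ), ∃ ε₀ ∈ Ioc (0:ℝ) 1, ∀ ε ∈ Ioc (0:ℝ) ε₀, |x ε| ≤ C * ε ^ m

/-- Equivalence of representatives. -/
def REquiv (x y : ℝ → ℝ) : Prop := RNegligible fun ε => x ε - y ε

/-- The order on representatives of `ℝ̃`. -/
def RLe (x y : ℝ → ℝ) : Prop :=
  ∃ z : ℝ → ℝ, RNegligible z ∧ ∃ ε₀ ∈ Ioc (0:ℝ) 1, ∀ ε ∈ Ioc (0:ℝ) ε₀, x ε ≤ y ε + z ε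

lemma rneg_zero : RNegligible (fun _ => (0:ℝ)) := by
  intro m
  refine ⟨1, one_pos, 1, ⟨one_pos, le_refl 1⟩, fun ε hε => by
    simp only [abs_zero, one_mul]
    exact pow_nonneg hε.1.le m⟩

lemma rneg_mono {u v : ℝ → ℝ} (hu : RNegligible u)
    (h : ∃ ε₀ ∈ Ioc (0:ℝ) 1, ∀ ε ∈ Ioc (0:ℝ) ε₀, |v ε| ≤ |u ε|) : RNegligible v := by
  intro m
  obtain ⟨C, hC, ε₀, hε₀, hb⟩ := hu m
  obtain ⟨ε₁, hε₁, hle⟩ := h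
  refine ⟨C, hC, min ε₀ ε₁, ⟨lt_min hε₀.1 hε₁.1, (min_le_left _ _).trans hε₀.2⟩, fun ε hε => ?_⟩
  have h1 : ε ∈ Ioc (0:ℝ) ε₀ := ⟨hε.1, hε.2.trans (min_le_left _ _)⟩
  have h2 : ε ∈ Ioc (0:ℝ) ε₁ := ⟨hε.1, hε.2.trans (min_le_right _ _)⟩
  exact (hle ε h2).trans (hb ε h1)

lemma rneg_add {u v : ℝ → ℝ} (hu : RNegligible u) (hv : RNegligible v) :
    RNegligible (fun ε => u ε + v ε) := by
  intro m
  obtain ⟨C, hC, ε₀, hε₀, hb⟩ := hu m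
  obtain ⟨D, hD, ε₁, hε₁, hb'⟩ := hv m
  refine ⟨C + D, by linarith, min ε₀ ε₁, ⟨lt_min hε₀.1 hε₁.1, (min_le_left _ _).trans hε₀.2⟩,
    fun ε hε => ?_⟩
  have h1 := hb ε ⟨hε.1, hε.2.trans (min_le_left _ _)⟩
  have h2 := hb' ε ⟨hε.1, hε.2.trans (min_le_right _ _)⟩
  calc |u ε + v ε| ≤ |u ε| + |v ε| := abs_add_le _ _
    _ ≤ C * ε ^ m + D * ε ^ m := add_le_add h1 h2
    _ = (C + D) * ε ^ m := by ring

lemma rneg_abs {u : ℝ → ℝ} (hu : RNegligible u) : RNegligible (fun ε => |u ε|) :=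
  rneg_mono hu ⟨1, ⟨one_pos, le_refl 1⟩, fun ε _ => by simp⟩

lemma abs_min_sub_min (a b a' b' : ℝ) :
    |min a b - min a' b'| ≤ |a - a'| + |b - b'| := by
  have := abs_min_sub_min_le_max a b a' b'
  rcases max_cases |a - a'| |b - b'| with ⟨h, _⟩ | ⟨h, _⟩ <;>
    · rw [h] at this; have := abs_nonneg (a - a'); have := abs_nonneg (b - b'); linarith

/-- For generalized numbers `x = [x_ε]`, `y = [y_ε]`, the element `x ∧ y := [min (x_ε) (y_ε)]`
is well defined (independent of the representatives) and is the infimum of `x` and `y` for the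
order of `ℝ̃`. -/
theorem colombeau_min_is_infimum
    (x x' y y' z : ℝ → ℝ)
    (hx : RModerate x) (hx' : RModerate x') (hy : RModerate y) (hy' : RModerate y')
    (hz : RModerate z) :
    (REquiv x x' → REquiv y y' →
      REquiv (fun ε => min (x ε) (y ε)) (fun ε => min (x' ε) (y' ε))) ∧
    RLe (fun ε => min (x ε) (y ε)) x ∧
    RLe (fun ε => min (x ε) (y ε)) y ∧
    (RLe z x → RLe z y → RLe z (fun ε => min (x ε) (y ε))) := by
  refine ⟨?_, ?_, ?_, ?_⟩
  · intro h1 h2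
    refine rneg_mono (rneg_add (rneg_abs h1) (rneg_abs h2))
      ⟨1, ⟨one_pos, le_refl 1⟩, fun ε _ => ?_⟩
    have h := abs_min_sub_min (x ε) (y ε) (x' ε) (y' ε)
    have b1 := abs_nonneg (x ε - x' ε)
    have b2 := abs_nonneg (y ε - y' ε)
    simp only [abs_abs]
    rw [abs_of_nonneg (by linarith : (0:ℝ) ≤ |x ε - x' ε| + |y ε - y' ε|)]
    exact h
  · exact ⟨fun _ => 0, rneg_zero, 1, ⟨one_pos, le_refl 1⟩,
      fun ε _ => by simpa using min_le_left (x ε) (y ε)⟩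
  · exact ⟨fun _ => 0, rneg_zero, 1, ⟨one_pos, le_refl 1⟩,
      fun ε _ => by simpa using min_le_right (x ε) (y ε)⟩
  · rintro ⟨n1, hn1, ε₀, hε₀, h1⟩ ⟨n2, hn2, ε₁, hε₁, h2⟩
    refine ⟨fun ε => |n1 ε| + |n2 ε|, rneg_add (rneg_abs hn1) (rneg_abs hn2),
      min ε₀ ε₁, ⟨lt_min hε₀.1 hε₁.1, (min_le_left _ _).trans hε₀.2⟩, fun ε hε => ?_⟩
    have hx1 := h1 ε ⟨hε.1, hε.2.trans (min_le_left _ _)⟩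
    have hy1 := h2 ε ⟨hε.1, hε.2.trans (min_le_right _ _)⟩
    have a1 := le_abs_self (n1 ε)
    have a2 := le_abs_self (n2 ε)
    have b1 := abs_nonneg (n1 ε)
    have b2 := abs_nonneg (n2 ε)
    show z ε ≤ min (x ε) (y ε) + (|n1 ε| + |n2 ε|)
    rcases le_total (x ε) (y ε) with h | h
    · rw [min_eq_left h]; linarith
    · rw [min_eq_right h]; linarith
end

section
/- Compactly bounded (c-bounded) Colombeau generalized functions are closed under composition at the level of representatives: if (u_ε) is a moderate net from Ω to Ω' that is c-bounded (for every compact K ⊆ Ω there is a compact K' ⊆ Ω' with u_ε(K) ⊆ K' for ε small) and (v_ε) is a moderate net on Ω', then the net (v_ε ∘ u_ε) is a moderate net on Ω. -/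
open Set

/-- Moderate nets of real-valued smooth functions on `Ω' ⊆ ℝ^d`. -/
def IsModerateNet {d : ℕ} (Ω' : Set (Fin d → ℝ)) (v : ℝ → (Fin d → ℝ) → ℝ) : Prop :=
  ∀ K : Set (Fin d → ℝ), K ⊆ Ω' → IsCompact K → ∀ i : ℕ, ∃ N : ℕ, ∃ C > (0:ℝ),
    ∃ ε₀ ∈ Ioc (0:ℝ) 1, ∀ ε ∈ Ioc (0:ℝ) ε₀, ∀ x ∈ K,
      ‖iteratedFDerivWithin ℝ i (v ε) Ω' x‖ ≤ C * ε ^ (-(N:ℤ))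

/-- Moderate nets of smooth maps from `Ω ⊆ ℝⁿ` to `ℝ^d`. -/
def IsModerateNetMap {n d : ℕ} (Ω : Set (Fin n → ℝ)) (u : ℝ → (Fin n → ℝ) → Fin d → ℝ) : Prop :=
  ∀ K : Set (Fin n → ℝ), K ⊆ Ω → IsCompact K → ∀ i : ℕ, ∃ N : ℕ, ∃ C > (0:ℝ),
    ∃ ε₀ ∈ Ioc (0:ℝ) 1, ∀ ε ∈ Ioc (0:ℝ) ε₀, ∀ x ∈ K,
      ‖iteratedFDerivWithin ℝ i (u ε) Ω x‖ ≤ C * ε ^ (-(N:ℤ))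

/-- The net `(u_ε)` is compactly bounded (c-bounded) from `Ω` into `Ω'`: for every compact
`K ⊆ Ω` there is a compact `K' ⊆ Ω'` with `u_ε(K) ⊆ K'` for `ε` small. -/
def IsCBounded {n d : ℕ} (Ω : Set (Fin n → ℝ)) (Ω' : Set (Fin d → ℝ))
    (u : ℝ → (Fin n → ℝ) → Fin d → ℝ) : Prop :=
  ∀ K : Set (Fin n → ℝ), K ⊆ Ω → IsCompact K →
    ∃ K' : Set (Fin d → ℝ), IsCompact K' ∧ K' ⊆ Ω' ∧
      ∃ ε₀ ∈ Ioc (0:ℝ) 1, ∀ ε ∈ Ioc (0:ℝ) ε₀, (u ε) '' K ⊆ K'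

/-- Composition of a c-bounded moderate net from `Ω` to `Ω'` with a moderate net on `Ω'` is a
moderate net on `Ω`. -/
theorem comp_of_cbounded_moderate_is_moderate {n d : ℕ}
    (Ω : Set (Fin n → ℝ)) (Ω' : Set (Fin d → ℝ)) (hΩ : IsOpen Ω) (hΩ' : IsOpen Ω')
    (u : ℝ → (Fin n → ℝ) → Fin d → ℝ) (v : ℝ → (Fin d → ℝ) → ℝ)
    (hus : ∀ ε ∈ Ioc (0:ℝ) 1, ContDiffOn ℝ (⊤ : ℕ∞) (u ε) Ω)
    (humaps : ∀ ε ∈ Ioc (0:ℝ) 1, MapsTo (u ε) Ω Ω')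
    (hvs : ∀ ε ∈ Ioc (0:ℝ) 1, ContDiffOn ℝ (⊤ : ℕ∞) (v ε) Ω')
    (hu : IsModerateNetMap Ω u) (hcb : IsCBounded Ω Ω' u) (hv : IsModerateNet Ω' v) :
    IsModerateNet Ω (fun ε x => v ε (u ε x)) := by
  intro K hK hKc i
  obtain ⟨K', hK'c, hK'Ω', ε₁, hε₁, hmaps⟩ := hcb K hK hKc
  choose Nu Cu hCu εu hεu hubd using hu K hK hKc
  choose Nv Cv hCv εv hεv hvbd using hv K' hK'Ω' hK'c
  set R := Finset.range (i + 1) with hR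
  have hRne : R.Nonempty := ⟨0, Finset.mem_range.2 (Nat.succ_pos _)⟩
  set Nu' : ℕ := R.sup Nu
  set Nv' : ℕ := R.sup Nv
  set Cu' : ℝ := 1 + ∑ j ∈ R, Cu j
  set Cv' : ℝ := 1 + ∑ j ∈ R, Cv j
  have hCu'₁ : (1:ℝ) ≤ Cu' := by
    have : (0:ℝ) ≤ ∑ j ∈ R, Cu j := Finset.sum_nonneg fun j _ => (hCu j).le
    simp [Cu']; linarith
  have hCv'₁ : (1:ℝ) ≤ Cv' := by
    have : (0:ℝ) ≤ ∑ j ∈ R, Cv j := Finset.sum_nonneg fun j _ => (hCv j).le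
    simp [Cv']; linarith
  have hCuj : ∀ j ∈ R, Cu j ≤ Cu' := fun j hj => by
    have := Finset.single_le_sum (f := Cu) (fun k _ => (hCu k).le) hj
    simp only [Cu']; linarith
  have hCvj : ∀ j ∈ R, Cv j ≤ Cv' := fun j hj => by
    have := Finset.single_le_sum (f := Cv) (fun k _ => (hCv k).le) hj
    simp only [Cv']; linarith
  have hNuj : ∀ j ∈ R, Nu j ≤ Nu' := fun j hj => Finset.le_sup hj
  have hNvj : ∀ j ∈ R, Nv j ≤ Nv' := fun j hj => Finset.le_sup hj
  clear_value Nu' Nv' Cu' Cv'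
  set ε₀ : ℝ := min ε₁ (min (R.inf' hRne εu) (R.inf' hRne εv)) with hε₀def
  have hε₀ : ε₀ ∈ Ioc (0:ℝ) 1 := by
    constructor
    · refine lt_min hε₁.1 (lt_min ?_ ?_)
      · exact (Finset.lt_inf'_iff hRne).2 fun j _ => (hεu j).1
      · exact (Finset.lt_inf'_iff hRne).2 fun j _ => (hεv j).1
    · exact le_trans (min_le_left _ _) hε₁.2
  refine ⟨Nv' + i * Nu', (Nat.factorial i : ℝ) * Cv' * Cu' ^ i, by positivity, ε₀, hε₀, ?_⟩
  intro ε hε x hx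
  have hεpos : 0 < ε := hε.1
  have hεne : ε ≠ 0 := ne_of_gt hεpos
  have hε1 : ε ≤ 1 := le_trans hε.2 hε₀.2
  have hεI : ε ∈ Ioc (0:ℝ) 1 := ⟨hεpos, hε1⟩
  have hεle₁ : ε ≤ ε₁ := le_trans hε.2 (min_le_left _ _)
  have hεleu : ∀ j ∈ R, ε ≤ εu j := fun j hj =>
    le_trans hε.2 (le_trans (le_trans (min_le_right _ _) (min_le_left _ _))
      (Finset.inf'_le _ hj))
  have hεlev : ∀ j ∈ R, ε ≤ εv j := fun j hj =>
    le_trans hε.2 (le_trans (le_trans (min_le_right _ _) (min_le_right _ _))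
      (Finset.inf'_le _ hj))
  have huεx : u ε x ∈ K' := hmaps ε ⟨hεpos, hεle₁⟩ ⟨x, hx, rfl⟩
  -- monotonicity of ε ^ (-(N:ℤ))
  have hzmono : ∀ m m' : ℕ, m ≤ m' → ε ^ (-(m:ℤ)) ≤ ε ^ (-(m':ℤ)) := fun m m' h =>
    zpow_le_zpow_right_of_le_one₀ hεpos hε1 (by exact_mod_cast neg_le_neg (by exact_mod_cast h))
  have hz1 : ∀ m : ℕ, (1:ℝ) ≤ ε ^ (-(m:ℤ)) := fun m =>
    one_le_zpow_of_nonpos₀ hεpos hε1 (by simp)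
  have hC : ∀ j, j ≤ i → ‖iteratedFDerivWithin ℝ j (v ε) Ω' (u ε x)‖ ≤ Cv' * ε ^ (-(Nv':ℤ)) := by
    intro j hj
    have hjR : j ∈ R := Finset.mem_range.2 (Nat.lt_succ_of_le hj)
    calc ‖iteratedFDerivWithin ℝ j (v ε) Ω' (u ε x)‖
        ≤ Cv j * ε ^ (-(Nv j:ℤ)) :=
          hvbd j ε ⟨hεpos, hεlev j hjR⟩ (u ε x) huεx
      _ ≤ Cv' * ε ^ (-(Nv':ℤ)) := by
          apply mul_le_mul (hCvj j hjR) (hzmono _ _ (hNvj j hjR))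
            (le_of_lt (by positivity)) (by linarith)
  have hDge1 : (1:ℝ) ≤ Cu' * ε ^ (-(Nu':ℤ)) := by
    calc (1:ℝ) = 1 * 1 := by ring
      _ ≤ Cu' * ε ^ (-(Nu':ℤ)) := mul_le_mul hCu'₁ (hz1 _) zero_le_one (by linarith)
  have hD : ∀ j, 1 ≤ j → j ≤ i →
      ‖iteratedFDerivWithin ℝ j (u ε) Ω x‖ ≤ (Cu' * ε ^ (-(Nu':ℤ))) ^ j := by
    intro j hj1 hji
    have hjR : j ∈ R := Finset.mem_range.2 (Nat.lt_succ_of_le hji)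
    calc ‖iteratedFDerivWithin ℝ j (u ε) Ω x‖
        ≤ Cu j * ε ^ (-(Nu j:ℤ)) := hubd j ε ⟨hεpos, hεleu j hjR⟩ x hx
      _ ≤ Cu' * ε ^ (-(Nu':ℤ)) := by
          apply mul_le_mul (hCuj j hjR) (hzmono _ _ (hNuj j hjR))
            (le_of_lt (by positivity)) (by linarith)
      _ = (Cu' * ε ^ (-(Nu':ℤ))) ^ 1 := (pow_one _).symm
      _ ≤ (Cu' * ε ^ (-(Nu':ℤ))) ^ j := pow_le_pow_right₀ hDge1 hj1
  have key := norm_iteratedFDerivWithin_comp_le (𝕜 := ℝ) (n := i)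
    (hvs ε hεI) (hus ε hεI) (by exact_mod_cast le_top) hΩ'.uniqueDiffOn hΩ.uniqueDiffOn
    (humaps ε hεI) (hK hx) hC hD
  have hcomp : (fun y => v ε (u ε y)) = (v ε) ∘ (u ε) := rfl
  calc ‖iteratedFDerivWithin ℝ i (fun y => v ε (u ε y)) Ω x‖
      = ‖iteratedFDerivWithin ℝ i ((v ε) ∘ (u ε)) Ω x‖ := by rw [hcomp]
    _ ≤ ↑(Nat.factorial i : ℝ) * (Cv' * ε ^ (-(Nv':ℤ))) * (Cu' * ε ^ (-(Nu':ℤ))) ^ i := key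
    _ = (Nat.factorial i : ℝ) * Cv' * Cu' ^ i * (ε ^ (-(Nv':ℤ)) * (ε ^ (-(Nu':ℤ))) ^ i) := by ring_nf
    _ = (Nat.factorial i : ℝ) * Cv' * Cu' ^ i * ε ^ (-((Nv' + i * Nu' : ℕ):ℤ)) := by
        rw [← zpow_natCast (ε ^ (-(Nu':ℤ))) i, ← zpow_mul, ← zpow_add₀ hεne]
        congr 1
        push_cast
        ring
end

section
/- Let X be a diffeological space whose diffeology is generated by a family F of locally defined smooth functionals, with F_A nonempty for every D-open subset A of X. Then the initial topology τ_F on |X| induced by all functionals in F coincides with the D-topology τ_X. -/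
open Set

/-- A diffeology on a set `X`: for each open `U ⊆ ℝⁿ` a family of plots `U → X` (encoded as
total functions, where only the values on `U` matter) satisfying the covering condition,
the presheaf condition (precomposition with smooth maps) and the sheaf condition (locality). -/
structure Diffeology' (X : Type) : Type 1 where
  IsPlot : (n : ℕ) → (U : Set (Fin n → ℝ)) → IsOpen U → ((Fin n → ℝ) → X) → Prop
  const_plot : ∀ (n : ℕ) (U : Set (Fin n → ℝ)) (hU : IsOpen U) (x : X),
    IsPlot n U hU fun _ => x
  congr_plot : ∀ (n : ℕ) (U : Set (Fin n → ℝ)) (hU : IsOpen U)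
    (d d' : (Fin n → ℝ) → X), Set.EqOn d d' U → IsPlot n U hU d → IsPlot n U hU d'
  precomp_plot : ∀ (n m : ℕ) (U : Set (Fin n → ℝ)) (V : Set (Fin m → ℝ))
    (hU : IsOpen U) (hV : IsOpen V) (d : (Fin n → ℝ) → X) (f : (Fin m → ℝ) → Fin n → ℝ),
    IsPlot n U hU d → ContDiffOn ℝ (⊤ : ℕ∞) f V → Set.MapsTo f V U → IsPlot m V hV (d ∘ f)
  locality : ∀ (n : ℕ) (U : Set (Fin n → ℝ)) (hU : IsOpen U) (d : (Fin n → ℝ) → X),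
    (∀ u ∈ U, ∃ V : Set (Fin n → ℝ), ∃ hV : IsOpen V, u ∈ V ∧ V ⊆ U ∧ IsPlot n V hV d) →
    IsPlot n U hU d

/-- Inclusion of diffeologies: every plot of `D` is a plot of `D'`. -/
def DLe {X : Type} (D D' : Diffeology' X) : Prop :=
  ∀ (n : ℕ) (U : Set (Fin n → ℝ)) (hU : IsOpen U) (d : (Fin n → ℝ) → X),
    D.IsPlot n U hU d → D'.IsPlot n U hU d

/-- `A ⊆ X` is D-open: its preimage under every plot is open. -/
def DOpen {X : Type} (D : Diffeology' X) (A : Set X) : Prop :=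
  ∀ (n : ℕ) (U : Set (Fin n → ℝ)) (hU : IsOpen U) (d : (Fin n → ℝ) → X),
    D.IsPlot n U hU d → IsOpen {u | u ∈ U ∧ d u ∈ A}

/-- A smooth map of diffeological spaces sends plots to plots. -/
def DSmooth {X Y : Type} (D : Diffeology' X) (D' : Diffeology' Y) (f : X → Y) : Prop :=
  ∀ (n : ℕ) (U : Set (Fin n → ℝ)) (hU : IsOpen U) (d : (Fin n → ℝ) → X),
    D.IsPlot n U hU d → D'.IsPlot n U hU (f ∘ d)

/-- `l : X → ℝ` (with only its values on `A` relevant) is a smooth functional on the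
diffeological subspace `A ≺ X`: its composite with every plot of `X` with values in `A`
is an ordinary smooth function. -/
def SmoothFunctionalOn {X : Type} (D : Diffeology' X) (A : Set X) (l : X → ℝ) : Prop :=
  ∀ (n : ℕ) (U : Set (Fin n → ℝ)) (hU : IsOpen U) (d : (Fin n → ℝ) → X),
    D.IsPlot n U hU d → Set.MapsTo d U A → ContDiffOn ℝ (⊤ : ℕ∞) (l ∘ d) U

/-- `d : U → X` is continuous for the D-topology of `X` (and the Euclidean topology on `U`). -/
def DContinuousOn {X : Type} (D : Diffeology' X) {n : ℕ} (U : Set (Fin n → ℝ))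
    (d : (Fin n → ℝ) → X) : Prop :=
  ∀ A : Set X, DOpen D A → IsOpen {u | u ∈ U ∧ d u ∈ A}

/-- The family `F` of locally defined functionals (indexed by D-open subsets) generates the
diffeology `D`: any continuous `d : U → X` whose composites with all functionals of the family
are smooth is a plot. -/
def Generates {X : Type} (D : Diffeology' X) (F : Set X → Set (X → ℝ)) : Prop :=
  ∀ (n : ℕ) (U : Set (Fin n → ℝ)) (hU : IsOpen U) (d : (Fin n → ℝ) → X),
    DContinuousOn D U d →
    (∀ A : Set X, DOpen D A → ∀ l ∈ F A,
      ContDiffOn ℝ (⊤ : ℕ∞) (l ∘ d) {u | u ∈ U ∧ d u ∈ A}) →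
    D.IsPlot n U hU d

/-- If the diffeology of `X` is generated by a family `F` of locally defined smooth functionals
with `F A ≠ ∅` for every D-open `A`, then the initial topology `τ_F` induced by the functionals
of `F` coincides with the D-topology. -/
theorem functional_topology_eq_D_topology
    {X : Type} (D : Diffeology' X) (F : Set X → Set (X → ℝ))
    (hsm : ∀ A : Set X, DOpen D A → ∀ l ∈ F A, SmoothFunctionalOn D A l)
    (hgen : Generates D F)
    (hne : ∀ A : Set X, DOpen D A → (F A).Nonempty) :
    ∀ S : Set X, DOpen D S ↔
      (TopologicalSpace.generateFrom
        {T : Set X | ∃ A : Set X, DOpen D A ∧ ∃ l ∈ F A, ∃ V : Set ℝ,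
          IsOpen V ∧ T = A ∩ l ⁻¹' V}).IsOpen S := by
  intro S
  constructor
  · intro hS
    obtain ⟨l, hl⟩ := hne S hS
    exact TopologicalSpace.GenerateOpen.basic S
      ⟨S, hS, l, hl, Set.univ, isOpen_univ, by simp⟩
  · intro hS
    induction hS with
    | basic T hT =>
      obtain ⟨A, hA, l, hl, V, hV, rfl⟩ := hT
      intro n U hU d hd
      have hW : IsOpen {u | u ∈ U ∧ d u ∈ A} := hA n U hU d hd
      have hdW : D.IsPlot n {u | u ∈ U ∧ d u ∈ A} hW d := by
        have := D.precomp_plot n n U {u | u ∈ U ∧ d u ∈ A} hU hW d id hd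
          contDiffOn_id (fun u hu => hu.1)
        simpa using this
      have hsmo : ContDiffOn ℝ (⊤ : ℕ∞) (l ∘ d) {u | u ∈ U ∧ d u ∈ A} :=
        hsm A hA l hl n _ hW d hdW (fun u hu => hu.2)
      have hopen : IsOpen ({u | u ∈ U ∧ d u ∈ A} ∩ (l ∘ d) ⁻¹' V) :=
        hsmo.continuousOn.isOpen_inter_preimage hW hV
      convert hopen using 1
      ext u
      simp only [Set.mem_setOf_eq, Set.mem_inter_iff, Set.mem_preimage,
        Function.comp_apply]
      tauto
    | univ =>
      intro n U hU d _
      simpa using hU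
    | inter T T' _ _ ihT ihT' =>
      intro n U hU d hd
      have := (ihT n U hU d hd).inter (ihT' n U hU d hd)
      convert this using 1
      ext u; simp only [Set.mem_setOf_eq, Set.mem_inter_iff]; tauto
    | sUnion ts _ ih =>
      intro n U hU d hd
      have : {u | u ∈ U ∧ d u ∈ ⋃₀ ts} = ⋃ T ∈ ts, {u | u ∈ U ∧ d u ∈ T} := by
        ext u; simp [Set.mem_sUnion]
      rw [this]
      exact isOpen_biUnion fun T hT => ih T hT n U hU d hd
end

section
/- Let F : I → Man be a diagram of smooth manifolds admitting a limit in the category of smooth manifolds. Then the canonical map from the diffeological space underlying this manifold limit to the limit of the diagram computed in diffeological spaces is an isomorphism; i.e. the embedding of manifolds into diffeological spaces preserves all limits that exist in Man. -/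
open Set

open scoped Manifold
open CategoryTheory

/-- A bundled (Hausdorff, finite-dimensional) smooth manifold. -/
structure BundledManifold : Type 1 where
  dim : ℕ
  carrier : Type
  top : TopologicalSpace carrier
  t2 : @T2Space carrier top
  charts : @ChartedSpace (EuclideanSpace ℝ (Fin dim)) _ carrier top
  smooth : @IsManifold ℝ _ (EuclideanSpace ℝ (Fin dim)) _ _
      (EuclideanSpace ℝ (Fin dim)) _ (𝓡 dim) (⊤ : ℕ∞) carrier top charts

/-- Smooth maps between bundled manifolds, in the usual sense. -/
def MSmooth (M N : BundledManifold) (f : M.carrier → N.carrier) : Prop :=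
  letI := M.top; letI := M.charts; letI := N.top; letI := N.charts
  ContMDiff (𝓡 M.dim) (𝓡 N.dim) (⊤ : ℕ∞) f

/-- A plot of the standard diffeology of a manifold: a map from an open Euclidean set which
is smooth in the usual sense. -/
def ManPlot (M : BundledManifold) {n : ℕ} (U : Set (Fin n → ℝ))
    (d : (Fin n → ℝ) → M.carrier) : Prop :=
  letI := M.top; letI := M.charts
  ContMDiffOn 𝓘(ℝ, Fin n → ℝ) (𝓡 M.dim) (⊤ : ℕ∞) d U

/-- A map from a diffeological space to a manifold (with its standard diffeology) is smooth
iff it sends plots to plots of the standard diffeology. -/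
def DSmoothToMan {X : Type} (D : Diffeology' X) (M : BundledManifold)
    (f : X → M.carrier) : Prop :=
  ∀ (n : ℕ) (U : Set (Fin n → ℝ)) (hU : IsOpen U) (d : (Fin n → ℝ) → X),
    D.IsPlot n U hU d → ManPlot M U (f ∘ d)

@[reducible] noncomputable def PtMan : BundledManifold where
  dim := 0
  carrier := EuclideanSpace ℝ (Fin 0)
  top := inferInstance
  t2 := inferInstance
  charts := chartedSpaceSelf _
  smooth := inferInstance

@[reducible] noncomputable def OpensMan (n : ℕ) (V : TopologicalSpace.Opens (EuclideanSpace ℝ (Fin n))) :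
    BundledManifold where
  dim := n
  carrier := V
  top := inferInstance
  t2 := inferInstance
  charts := inferInstance
  smooth := inferInstance


lemma msmooth_const (M N : BundledManifold) (y : N.carrier) : MSmooth M N fun _ => y := by
  letI := M.top; letI := M.charts; letI := N.top; letI := N.charts
  exact contMDiff_const

lemma manPlot_to_msmooth (M : BundledManifold) {n : ℕ}
    (V : TopologicalSpace.Opens (EuclideanSpace ℝ (Fin n)))
    (U : Set (Fin n → ℝ)) (hUV : ∀ v : V, EuclideanSpace.equiv (Fin n) ℝ v.val ∈ U)
    (d : (Fin n → ℝ) → M.carrier) (hd : ManPlot M U d) :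
    MSmooth (OpensMan n V) M (fun v => d (EuclideanSpace.equiv (Fin n) ℝ v.val)) := by
  letI := M.top; letI := M.charts
  exact hd.comp_contMDiff
    (((EuclideanSpace.equiv (Fin n) ℝ).toContinuousLinearMap.contDiff.contMDiff).comp
      contMDiff_subtype_val) hUV

lemma manPlot_of_opens (L : BundledManifold) {n : ℕ}
    (V : TopologicalSpace.Opens (EuclideanSpace ℝ (Fin n)))
    (U : Set (Fin n → ℝ))
    (hUV : ∀ z : EuclideanSpace ℝ (Fin n), EuclideanSpace.equiv (Fin n) ℝ z ∈ U ↔ z ∈ V)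
    (G : (Fin n → ℝ) → L.carrier)
    (h : MSmooth (OpensMan n V) L (fun v => G (EuclideanSpace.equiv (Fin n) ℝ v.val))) :
    ManPlot L U G := by
  letI := L.top; letI := L.charts
  set e : EuclideanSpace ℝ (Fin n) ≃L[ℝ] (Fin n → ℝ) := EuclideanSpace.equiv (Fin n) ℝ with he
  intro u huU
  apply ContMDiffAt.contMDiffWithinAt
  have hx : e.symm u ∈ V := by
    rw [← hUV, e.apply_symm_apply]; exact huU
  have hG : ContMDiffAt (𝓡 n) (𝓡 L.dim) (⊤ : ℕ∞) (fun z => G (e z)) (e.symm u) := by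
    have h1 : ContMDiffAt (𝓡 n) (𝓡 L.dim) (⊤ : ℕ∞)
        (fun v : V => (fun z => G (e z)) v.val) ⟨e.symm u, hx⟩ := h ⟨e.symm u, hx⟩
    exact (contMDiffAt_subtype_iff (U := V) (f := fun z => G (e z))).mp h1
  have heq : G = (fun z => G (e z)) ∘ (e.symm : (Fin n → ℝ) → EuclideanSpace ℝ (Fin n)) := by
    funext z
    show G z = G (e (e.symm z))
    rw [e.apply_symm_apply]
  rw [heq]
  exact hG.comp u (e.symm.toContinuousLinearMap.contDiff.contMDiff.contMDiffAt)

/-- The embedding of smooth manifolds into diffeological spaces preserves all limits that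
exist in `Man`: if `(L, π)` is a limiting cone over a diagram `F` of smooth manifolds in the
category of smooth manifolds, then `L` with its standard diffeology, together with the same
cone, satisfies the universal property of the limit of the diagram in diffeological spaces. -/
theorem manifold_limits_preserved_in_diffeology
    (J : Type) [CategoryTheory.Category J]
    (F : J → BundledManifold)
    (Fmap : ∀ {i j : J}, (i ⟶ j) → ((F i).carrier → (F j).carrier))
    (hFsm : ∀ {i j : J} (φ : i ⟶ j), MSmooth (F i) (F j) (Fmap φ))
    (hFid : ∀ i : J, Fmap (𝟙 i) = id)
    (hFcomp : ∀ {i j k : J} (φ : i ⟶ j) (ψ : j ⟶ k), Fmap (φ ≫ ψ) = Fmap ψ ∘ Fmap φ)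
    (L : BundledManifold) (π : ∀ j : J, L.carrier → (F j).carrier)
    (hπsm : ∀ j : J, MSmooth L (F j) (π j))
    (hcone : ∀ {i j : J} (φ : i ⟶ j), Fmap φ ∘ π i = π j)
    (hlim : ∀ (Xm : BundledManifold) (f : ∀ j : J, Xm.carrier → (F j).carrier),
      (∀ j, MSmooth Xm (F j) (f j)) → (∀ {i j : J} (φ : i ⟶ j), Fmap φ ∘ f i = f j) →
      ∃! g : Xm.carrier → L.carrier, MSmooth Xm L g ∧ ∀ j, π j ∘ g = f j) :
    ∀ (X : Type) (D : Diffeology' X) (f : ∀ j : J, X → (F j).carrier),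
      (∀ j, DSmoothToMan D (F j) (f j)) →
      (∀ {i j : J} (φ : i ⟶ j), Fmap φ ∘ f i = f j) →
      ∃! g : X → L.carrier, DSmoothToMan D L g ∧ ∀ j, π j ∘ g = f j := by
  intro X D f hfsm hfcone
  have key : ∀ x : X, ∃! y : L.carrier, ∀ j, π j y = f j x := by
    intro x
    obtain ⟨p, ⟨psm, hp⟩, pun⟩ := hlim PtMan (fun j _ => f j x)
      (fun j => msmooth_const PtMan (F j) (f j x))
      (fun {i j} φ => funext fun _ => congrFun (hfcone φ) x)
    have z : PtMan.carrier := (0 : EuclideanSpace ℝ (Fin 0))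
    refine ⟨p z, fun j => congrFun (hp j) z, fun y hy => ?_⟩
    have hq : (fun _ : PtMan.carrier => y) = p :=
      pun _ ⟨msmooth_const PtMan L y, fun j => funext fun _ => hy j⟩
    exact congrFun hq z
  choose g hg hu using key
  refine ⟨g, ⟨?_, fun j => funext fun x => hg x j⟩, ?_⟩
  · -- smoothness
    intro n U hU d hd
    set e : EuclideanSpace ℝ (Fin n) ≃L[ℝ] (Fin n → ℝ) := EuclideanSpace.equiv (Fin n) ℝ with he
    let V : TopologicalSpace.Opens (EuclideanSpace ℝ (Fin n)) :=
      ⟨(e : EuclideanSpace ℝ (Fin n) → (Fin n → ℝ)) ⁻¹' U, hU.preimage e.continuous⟩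
    have hmem : ∀ v : V, e v.val ∈ U := fun v => v.2
    obtain ⟨h, ⟨hsm, hπh⟩, hun⟩ := hlim (OpensMan n V) (fun j (v : V) => f j (d (e v.val)))
      (fun j => manPlot_to_msmooth (F j) V U hmem (f j ∘ d) (hfsm j n U hU d hd))
      (fun {i j} φ => funext fun v => congrFun (hfcone φ) (d (e v.val)))
    have hh : h = fun v : V => (g ∘ d) (e v.val) :=
      funext fun v => hu _ (h v) (fun j => congrFun (hπh j) v)
    refine manPlot_of_opens L V U (fun z => Iff.rfl) (g ∘ d) ?_
    rw [← hh]
    exact hsm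
  · rintro g' ⟨_, hg'⟩
    funext x
    exact hu x (g' x) (fun j => congrFun (hg' j) x)
end

section
/- Let G : J → Man be a diagram of smooth manifolds whose colimit exists in Man. Then the canonical smooth map from the colimit of the diagram in diffeological spaces (or in functionally generated spaces) to the manifold colimit is surjective on underlying sets. -/
open Set

open CategoryTheory

open scoped Manifold

theorem contMDiff_codRestrict_opens
    {E H M : Type*} [NormedAddCommGroup E] [NormedSpace ℝ E] [TopologicalSpace H]
    {I : ModelWithCorners ℝ E H} [TopologicalSpace M] [ChartedSpace H M]
    {E' H' N : Type*} [NormedAddCommGroup E'] [NormedSpace ℝ E'] [TopologicalSpace H']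
    {I' : ModelWithCorners ℝ E' H'} [TopologicalSpace N] [ChartedSpace H' N]
    {U : TopologicalSpace.Opens M} {f : N → M} (hmem : ∀ x, f x ∈ U)
    (hf : ContMDiff I' I (⊤ : ℕ∞) f) :
    ContMDiff I' I (⊤ : ℕ∞) (fun x => (⟨f x, hmem x⟩ : U)) := by
  intro x
  rw [contMDiffAt_iff_target]
  refine ⟨continuousAt_codRestrict_iff (t := (U : Set M)) hmem |>.mpr (hf x).continuousAt, ?_⟩
  exact (contMDiffAt_iff_target.mp (hf x)).2

/-- If the colimit of a diagram of smooth manifolds exists in `Man`, then the canonical smooth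
map from the colimit computed in diffeological (or functionally generated) spaces to the
manifold colimit is surjective on underlying sets: since the underlying set of the diffeological
colimit is the set-theoretic colimit, this means that every point of the manifold colimit lies
in the image of one of the cocone maps. -/
theorem manifold_colimit_canonical_map_surjective
    (J : Type) [CategoryTheory.Category J]
    (G : J → BundledManifold)
    (Gmap : ∀ {i j : J}, (i ⟶ j) → ((G i).carrier → (G j).carrier))
    (hGsm : ∀ {i j : J} (φ : i ⟶ j), MSmooth (G i) (G j) (Gmap φ))
    (hGid : ∀ i : J, Gmap (𝟙 i) = id)
    (hGcomp : ∀ {i j k : J} (φ : i ⟶ j) (ψ : j ⟶ k), Gmap (φ ≫ ψ) = Gmap ψ ∘ Gmap φ)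
    (L : BundledManifold) (ι : ∀ j : J, (G j).carrier → L.carrier)
    (hιsm : ∀ j : J, MSmooth (G j) L (ι j))
    (hcocone : ∀ {i j : J} (φ : i ⟶ j), ι j ∘ Gmap φ = ι i)
    (hcolim : ∀ (Xm : BundledManifold) (f : ∀ j : J, (G j).carrier → Xm.carrier),
      (∀ j, MSmooth (G j) Xm (f j)) → (∀ {i j : J} (φ : i ⟶ j), f j ∘ Gmap φ = f i) →
      ∃! g : L.carrier → Xm.carrier, MSmooth L Xm g ∧ ∀ j, g ∘ ι j = f j) :
    ∀ y : L.carrier, ∃ (j : J) (x : (G j).carrier), ι j x = y := by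
  intro y
  by_contra hy
  push_neg at hy
  letI := L.top; letI := L.charts
  haveI := L.t2; haveI := L.smooth
  let s : TopologicalSpace.Opens L.carrier := ⟨{y}ᶜ, isOpen_compl_singleton⟩
  have hmem : ∀ j (x : (G j).carrier), ι j x ∈ s := fun j x => hy j x
  let Xm : BundledManifold :=
    { dim := L.dim, carrier := s, top := inferInstance, t2 := inferInstance,
      charts := inferInstance, smooth := inferInstance }
  let f : ∀ j : J, (G j).carrier → Xm.carrier := fun j x => ⟨ι j x, hmem j x⟩
  have hfsm : ∀ j, MSmooth (G j) Xm (f j) := fun j => by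
    letI := (G j).top; letI := (G j).charts
    exact contMDiff_codRestrict_opens (hmem j) (hιsm j)
  have hfco : ∀ {i j : J} (φ : i ⟶ j), f j ∘ Gmap φ = f i := by
    intro i j φ
    funext x
    exact Subtype.ext (congrFun (hcocone φ) x)
  obtain ⟨g, ⟨hgsm, hg⟩, -⟩ := hcolim Xm f hfsm hfco
  obtain ⟨g₀, -, huniq⟩ := hcolim L ι hιsm (fun {i j} φ => hcocone φ)
  have hval : MSmooth Xm L (Subtype.val : s → L.carrier) := contMDiff_subtype_val
  have h1 : (Subtype.val ∘ g : L.carrier → L.carrier) = g₀ := by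
    refine huniq _ ⟨?_, ?_⟩
    · exact hval.comp hgsm
    · intro j
      rw [Function.comp_assoc, hg j]
      rfl
  have h2 : (id : L.carrier → L.carrier) = g₀ := by
    refine huniq _ ⟨?_, fun j => rfl⟩
    exact contMDiff_id
  have : (g y).1 = y := by
    have := congrFun (h1.trans h2.symm) y
    simpa using this
  exact (g y).2 this
end
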